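/- Let n ≥ 1, let M be a random variable with values in a finite set, and for each i ∈ {1,…,n} let X_i, A_i, Y_{1,i}, S_{1,i}, Y_{2,i}, S_{2,i} be random variables with values in finite sets, all on a common probability space. Assume that for every i ∈ {1,…,n}, S_{1,i} is conditionally independent of (Y_1^{n∖i}, Y_2^{n∖i}, S_2^{n∖i}, M, S_1^{i−1}) given (Y_{1,i}, Y_{2,i}, S_{2,i}, X_i, A_i), where X^{n∖i} denotes the tuple of all coordinates of X^n except the i-th. Then I(M; Y_1^n, S_1^n, Y_2^n, S_2^n) ≤ I(M; Y_2^n, S_2^n) + Σ_{i=1}^n [ H(Y_{1,i}, S_{1,i} | Y_{2,i}, S_{2,i}) − H(S_{1,i} | Y_{1,i}, Y_{2,i}, S_{2,i}, X_i, A_i) ]. (This is the second per-letter bound on the full-secrecy rate R in the converse proof of Theorem 3.) -/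

import Mathlib

open scoped BigOperators Classical

/-- A probability mass function on a finite type, representing a finite probability space. -/
structure FinPMF (Ω : Type*) [Fintype Ω] where
  p : Ω → ℝ
  nonneg : ∀ ω, 0 ≤ p ω
  sum_one : ∑ ω, p ω = 1

namespace FinPMF

variable {Ω : Type*} [Fintype Ω] (μ : FinPMF Ω)

/-- Probability that the random variable `X` takes the value `x`. -/
def prob {α : Type*} [DecidableEq α] (X : Ω → α) (x : α) : ℝ :=
  ∑ ω, if X ω = x then μ.p ω else 0

/-- Shannon entropy `H(X)` (with the natural logarithm as the fixed base)
of a random variable with values in a finite set. -/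
noncomputable def H {α : Type*} [Fintype α] [DecidableEq α] (X : Ω → α) : ℝ :=
  ∑ x : α, -(μ.prob X x * Real.log (μ.prob X x))

/-- Conditional Shannon entropy `H(X | Y) = H(X, Y) - H(Y)`. -/
noncomputable def condH {α β : Type*} [Fintype α] [DecidableEq α] [Fintype β] [DecidableEq β]
    (X : Ω → α) (Y : Ω → β) : ℝ :=
  μ.H (fun ω => (X ω, Y ω)) - μ.H Y

/-- Mutual information `I(X ; Y) = H(X) + H(Y) - H(X, Y)`. -/
noncomputable def mutInfo {α β : Type*} [Fintype α] [DecidableEq α] [Fintype β] [DecidableEq β]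
    (X : Ω → α) (Y : Ω → β) : ℝ :=
  μ.H X + μ.H Y - μ.H (fun ω => (X ω, Y ω))

/-- The random variables `X` and `Y` are independent. -/
def Indep {α β : Type*} [DecidableEq α] [DecidableEq β] (X : Ω → α) (Y : Ω → β) : Prop :=
  ∀ x y, μ.prob (fun ω => (X ω, Y ω)) (x, y) = μ.prob X x * μ.prob Y y

/-- Markov chain `A − B − C`: the random variables `A` and `C` are conditionally
independent given `B`, expressed multiplicatively as
`P(A=a, B=b, C=c) · P(B=b) = P(A=a, B=b) · P(B=b, C=c)`. -/
def CondIndep {α β γ : Type*} [DecidableEq α] [DecidableEq β] [DecidableEq γ]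
    (A : Ω → α) (B : Ω → β) (C : Ω → γ) : Prop :=
  ∀ a b c,
    μ.prob (fun ω => (A ω, B ω, C ω)) (a, b, c) * μ.prob B b =
      μ.prob (fun ω => (A ω, B ω)) (a, b) * μ.prob (fun ω => (B ω, C ω)) (b, c)

end FinPMF
namespace FinPMF

variable {Ω : Type*} [Fintype Ω] (μ : FinPMF Ω)

lemma prob_nonneg {α : Type*} [DecidableEq α] (X : Ω → α) (x : α) : 0 ≤ μ.prob X x := by
  unfold prob
  exact Finset.sum_nonneg fun ω _ => by split <;> simp [μ.nonneg ω]

lemma sum_prob {α : Type*} [Fintype α] [DecidableEq α] (X : Ω → α) : ∑ x, μ.prob X x = 1 := by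
  unfold prob
  rw [Finset.sum_comm]
  rw [← μ.sum_one]
  exact Finset.sum_congr rfl fun ω _ => by simp

lemma prob_comp {α β : Type*} [Fintype α] [DecidableEq α] [DecidableEq β]
    (f : α → β) (X : Ω → α) (y : β) :
    μ.prob (fun ω => f (X ω)) y = ∑ x, if f x = y then μ.prob X x else 0 := by
  unfold prob
  have : ∀ x : α, (if f x = y then ∑ ω, if X ω = x then μ.p ω else 0 else 0)
      = ∑ ω, if X ω = x then (if f x = y then μ.p ω else 0) else 0 := by
    intro x; split <;> simp
  rw [Finset.sum_congr rfl fun x _ => this x, Finset.sum_comm]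
  refine Finset.sum_congr rfl fun ω _ => ?_
  simp [Finset.sum_ite_eq]

end FinPMF
namespace FinPMF

variable {Ω : Type*} [Fintype Ω] (μ : FinPMF Ω)

lemma prob_le_prob_comp {α β : Type*} [Fintype α] [DecidableEq α] [DecidableEq β]
    (f : α → β) (X : Ω → α) (x : α) :
    μ.prob X x ≤ μ.prob (fun ω => f (X ω)) (f x) := by
  rw [μ.prob_comp f X (f x)]
  have := Finset.single_le_sum (f := fun x' : α => if f x' = f x then μ.prob X x' else 0)
    (fun x' _ => by split <;> simp [μ.prob_nonneg]) (Finset.mem_univ x)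
  simpa using this

lemma H_comp_le {α β : Type*} [Fintype α] [DecidableEq α] [Fintype β] [DecidableEq β]
    (f : α → β) (X : Ω → α) :
    μ.H (fun ω => f (X ω)) ≤ μ.H X := by
  unfold H
  have key : ∀ y : β, -(μ.prob (fun ω => f (X ω)) y * Real.log (μ.prob (fun ω => f (X ω)) y))
      ≤ ∑ x : α, if f x = y then -(μ.prob X x * Real.log (μ.prob X x)) else 0 := by
    intro y
    set q := μ.prob (fun ω => f (X ω)) y with hq
    have hqe : q = ∑ x : α, if f x = y then μ.prob X x else 0 := μ.prob_comp f X y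
    have : -(q * Real.log q) = ∑ x : α, if f x = y then -(μ.prob X x * Real.log q) else 0 := by
      rw [hqe, Finset.sum_mul, ← Finset.sum_neg_distrib]
      exact Finset.sum_congr rfl fun x _ => by split <;> simp
    rw [this]
    refine Finset.sum_le_sum fun x _ => ?_
    split
    · rename_i hfx
      rcases (μ.prob_nonneg X x).lt_or_eq with hp | hp
      · have hle : μ.prob X x ≤ q := by
          rw [hq, ← hfx]; exact μ.prob_le_prob_comp f X x
        have := Real.log_le_log hp hle
        nlinarith
      · simp [← hp]
    · exact le_rfl
  calc ∑ y : β, -(μ.prob (fun ω => f (X ω)) y * Real.log (μ.prob (fun ω => f (X ω)) y))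
      ≤ ∑ y : β, ∑ x : α, if f x = y then -(μ.prob X x * Real.log (μ.prob X x)) else 0 :=
        Finset.sum_le_sum fun y _ => key y
    _ = ∑ x : α, -(μ.prob X x * Real.log (μ.prob X x)) := by
        rw [Finset.sum_comm]
        exact Finset.sum_congr rfl fun x _ => by simp [Finset.sum_ite_eq]

lemma H_comp_eq {α β : Type*} [Fintype α] [DecidableEq α] [Fintype β] [DecidableEq β]
    (f : α → β) (g : β → α) (X : Ω → α) (h : ∀ ω, g (f (X ω)) = X ω) :
    μ.H (fun ω => f (X ω)) = μ.H X := by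
  refine le_antisymm (μ.H_comp_le f X) ?_
  have hX : X = fun ω => g (f (X ω)) := funext fun ω => (h ω).symm
  calc μ.H X = μ.H (fun ω => g (f (X ω))) := by rw [← hX]
    _ ≤ μ.H (fun ω => f (X ω)) := μ.H_comp_le g (fun ω => f (X ω))

end FinPMF
set_option linter.unusedSectionVars false
namespace FinPMF

variable {Ω : Type*} [Fintype Ω] (μ : FinPMF Ω)
variable {α β γ : Type*} [Fintype α] [DecidableEq α] [Fintype β] [DecidableEq β]
  [Fintype γ] [DecidableEq γ]

lemma prob_marg_right (U : Ω → α) (V : Ω → β) (u : α) :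
    ∑ v, μ.prob (fun ω => (U ω, V ω)) (u, v) = μ.prob U u := by
  unfold prob
  rw [Finset.sum_comm]
  refine Finset.sum_congr rfl fun ω _ => ?_
  simp [Prod.ext_iff, ite_and, Finset.sum_ite_eq]

lemma prob_marg_left (U : Ω → α) (V : Ω → β) (v : β) :
    ∑ u, μ.prob (fun ω => (U ω, V ω)) (u, v) = μ.prob V v := by
  unfold prob
  rw [Finset.sum_comm]
  refine Finset.sum_congr rfl fun ω _ => ?_
  simp [Prod.ext_iff, ite_and, Finset.sum_ite_eq]

lemma prob_marg3_mid (U : Ω → α) (V : Ω → β) (W : Ω → γ) (x : α) (z : γ) :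
    ∑ y, μ.prob (fun ω => (U ω, V ω, W ω)) (x, y, z) = μ.prob (fun ω => (U ω, W ω)) (x, z) := by
  unfold prob
  rw [Finset.sum_comm]
  refine Finset.sum_congr rfl fun ω _ => ?_
  simp [Prod.ext_iff, ite_and, Finset.sum_ite_eq]

lemma prob_marg3_fst (U : Ω → α) (V : Ω → β) (W : Ω → γ) (y : β) (z : γ) :
    ∑ x, μ.prob (fun ω => (U ω, V ω, W ω)) (x, y, z) = μ.prob (fun ω => (V ω, W ω)) (y, z) := by
  unfold prob
  rw [Finset.sum_comm]
  refine Finset.sum_congr rfl fun ω _ => ?_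
  simp [Prod.ext_iff, ite_and, Finset.sum_ite_eq]

lemma prob_marg3_lst (U : Ω → α) (V : Ω → β) (W : Ω → γ) (x : α) (y : β) :
    ∑ z, μ.prob (fun ω => (U ω, V ω, W ω)) (x, y, z) = μ.prob (fun ω => (U ω, V ω)) (x, y) := by
  unfold prob
  rw [Finset.sum_comm]
  refine Finset.sum_congr rfl fun ω _ => ?_
  simp [Prod.ext_iff, ite_and, Finset.sum_ite_eq]

lemma prob_le_marg3_mid (U : Ω → α) (V : Ω → β) (W : Ω → γ) (x y z) :
    μ.prob (fun ω => (U ω, V ω, W ω)) (x, y, z) ≤ μ.prob (fun ω => (U ω, W ω)) (x, z) := by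
  rw [← μ.prob_marg3_mid U V W x z]
  exact Finset.single_le_sum (f := fun y' => μ.prob (fun ω => (U ω, V ω, W ω)) (x, y', z))
    (fun y' _ => μ.prob_nonneg _ _) (Finset.mem_univ y)

lemma prob_le_marg3_fst (U : Ω → α) (V : Ω → β) (W : Ω → γ) (x y z) :
    μ.prob (fun ω => (U ω, V ω, W ω)) (x, y, z) ≤ μ.prob (fun ω => (V ω, W ω)) (y, z) := by
  rw [← μ.prob_marg3_fst U V W y z]
  exact Finset.single_le_sum (f := fun x' => μ.prob (fun ω => (U ω, V ω, W ω)) (x', y, z))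
    (fun x' _ => μ.prob_nonneg _ _) (Finset.mem_univ x)

lemma prob_le_marg3_lst (U : Ω → α) (V : Ω → β) (W : Ω → γ) (x y z) :
    μ.prob (fun ω => (U ω, V ω, W ω)) (x, y, z) ≤ μ.prob (fun ω => (U ω, V ω)) (x, y) := by
  rw [← μ.prob_marg3_lst U V W x y]
  exact Finset.single_le_sum (f := fun z' => μ.prob (fun ω => (U ω, V ω, W ω)) (x, y, z'))
    (fun z' _ => μ.prob_nonneg _ _) (Finset.mem_univ z)

lemma prob_le_marg_right (U : Ω → α) (V : Ω → β) (u v) :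
    μ.prob (fun ω => (U ω, V ω)) (u, v) ≤ μ.prob U u := by
  rw [← μ.prob_marg_right U V u]
  exact Finset.single_le_sum (f := fun v' => μ.prob (fun ω => (U ω, V ω)) (u, v'))
    (fun v' _ => μ.prob_nonneg _ _) (Finset.mem_univ v)

lemma prob_le_marg_left (U : Ω → α) (V : Ω → β) (u v) :
    μ.prob (fun ω => (U ω, V ω)) (u, v) ≤ μ.prob V v := by
  rw [← μ.prob_marg_left U V v]
  exact Finset.single_le_sum (f := fun u' => μ.prob (fun ω => (U ω, V ω)) (u', v))
    (fun u' _ => μ.prob_nonneg _ _) (Finset.mem_univ u)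

end FinPMF
set_option linter.unusedSectionVars false
namespace FinPMF

private lemma sum3_zxy {α β γ : Type*} [Fintype α] [Fintype β] [Fintype γ]
    (f : α → β → γ → ℝ) :
    ∑ x, ∑ y, ∑ z, f x y z = ∑ z, ∑ x, ∑ y, f x y z := by
  rw [Finset.sum_congr rfl (fun x _ => Finset.sum_comm (s := Finset.univ) (t := Finset.univ)
    (f := fun y z => f x y z))]
  exact Finset.sum_comm

private lemma sum3_xzy {α β γ : Type*} [Fintype α] [Fintype β] [Fintype γ]
    (f : α → β → γ → ℝ) :
    ∑ x, ∑ y, ∑ z, f x y z = ∑ x, ∑ z, ∑ y, f x y z :=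
  Finset.sum_congr rfl (fun x _ => Finset.sum_comm (f := fun y z => f x y z))

private lemma sum3_yzx {α β γ : Type*} [Fintype α] [Fintype β] [Fintype γ]
    (f : α → β → γ → ℝ) :
    ∑ x, ∑ y, ∑ z, f x y z = ∑ y, ∑ z, ∑ x, f x y z := by
  rw [Finset.sum_comm]
  exact Finset.sum_congr rfl (fun y _ => Finset.sum_comm (f := fun x z => f x y z))

private lemma logterm {p a b c : ℝ} (hp : 0 ≤ p)
    (hpa : p ≤ a) (hpb : p ≤ b) (hpc : p ≤ c) (hdiv : 0 ≤ a * b / c) :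
    p - a * b / c ≤ p * Real.log p + p * Real.log c - p * Real.log a - p * Real.log b := by
  rcases hp.lt_or_eq with hp0 | hp0
  · have ha0 : 0 < a := lt_of_lt_of_le hp0 hpa
    have hb0 : 0 < b := lt_of_lt_of_le hp0 hpb
    have hc0 : 0 < c := lt_of_lt_of_le hp0 hpc
    have hx : 0 < a * b / (p * c) := by positivity
    have hlog := Real.log_le_sub_one_of_pos hx
    have hexp : Real.log (a * b / (p * c)) =
        Real.log a + Real.log b - Real.log p - Real.log c := by
      rw [Real.log_div (by positivity) (by positivity), Real.log_mul ha0.ne' hb0.ne',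
        Real.log_mul hp0.ne' hc0.ne']
      ring
    rw [hexp] at hlog
    have h2 : p * (Real.log a + Real.log b - Real.log p - Real.log c)
        ≤ p * (a * b / (p * c) - 1) :=
      mul_le_mul_of_nonneg_left hlog hp
    have h3 : p * (a * b / (p * c) - 1) = a * b / c - p := by
      field_simp
    nlinarith [h2, h3]
  · rw [← hp0]
    simp
    nlinarith [hdiv]

variable {Ω : Type*} [Fintype Ω] (μ : FinPMF Ω)
variable {α β γ : Type*} [Fintype α] [DecidableEq α] [Fintype β] [DecidableEq β]
  [Fintype γ] [DecidableEq γ]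

lemma submodular (U : Ω → α) (V : Ω → β) (W : Ω → γ) :
    μ.H (fun ω => (U ω, V ω, W ω)) + μ.H W
      ≤ μ.H (fun ω => (U ω, W ω)) + μ.H (fun ω => (V ω, W ω)) := by
  set p := fun (x : α) (y : β) (z : γ) => μ.prob (fun ω => (U ω, V ω, W ω)) (x, y, z) with hp
  set pxz := fun (x : α) (z : γ) => μ.prob (fun ω => (U ω, W ω)) (x, z) with hpxz
  set pyz := fun (y : β) (z : γ) => μ.prob (fun ω => (V ω, W ω)) (y, z) with hpyz
  set pz := fun (z : γ) => μ.prob W z with hpz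
  have hpnn : ∀ x y z, 0 ≤ p x y z := fun x y z => μ.prob_nonneg _ _
  have hxznn : ∀ x z, 0 ≤ pxz x z := fun x z => μ.prob_nonneg _ _
  have hyznn : ∀ y z, 0 ≤ pyz y z := fun y z => μ.prob_nonneg _ _
  have hznn : ∀ z, 0 ≤ pz z := fun z => μ.prob_nonneg _ _
  have m_mid : ∀ x z, ∑ y, p x y z = pxz x z := fun x z => μ.prob_marg3_mid U V W x z
  have m_fst : ∀ y z, ∑ x, p x y z = pyz y z := fun y z => μ.prob_marg3_fst U V W y z
  have m_z1 : ∀ z, ∑ x, pxz x z = pz z := fun z => μ.prob_marg_left U W z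
  have m_z2 : ∀ z, ∑ y, pyz y z = pz z := fun z => μ.prob_marg_left V W z
  have hle_xz : ∀ x y z, p x y z ≤ pxz x z := fun x y z => μ.prob_le_marg3_mid U V W x y z
  have hle_yz : ∀ x y z, p x y z ≤ pyz y z := fun x y z => μ.prob_le_marg3_fst U V W x y z
  have hle_z : ∀ x z, pxz x z ≤ pz z := fun x z => μ.prob_le_marg_left U W x z
  -- entropies as explicit sums
  have hH3 : μ.H (fun ω => (U ω, V ω, W ω))
      = -∑ x, ∑ y, ∑ z, p x y z * Real.log (p x y z) := by
    unfold H
    simp only [Fintype.sum_prod_type, Finset.sum_neg_distrib, hp]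
  have hHxz : μ.H (fun ω => (U ω, W ω)) = -∑ x, ∑ z, pxz x z * Real.log (pxz x z) := by
    unfold H
    simp only [Fintype.sum_prod_type, Finset.sum_neg_distrib, hpxz]
  have hHyz : μ.H (fun ω => (V ω, W ω)) = -∑ y, ∑ z, pyz y z * Real.log (pyz y z) := by
    unfold H
    simp only [Fintype.sum_prod_type, Finset.sum_neg_distrib, hpyz]
  have hHz : μ.H W = -∑ z, pz z * Real.log (pz z) := by
    unfold H
    simp only [Finset.sum_neg_distrib, hpz]
  -- re-express marginal entropy sums as triple sums
  have eZ : ∑ z, pz z * Real.log (pz z) = ∑ x, ∑ y, ∑ z, p x y z * Real.log (pz z) := by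
    rw [sum3_zxy]
    refine Finset.sum_congr rfl fun z _ => ?_
    symm
    have h1 : ∀ x, ∑ y, p x y z * Real.log (pz z) = pxz x z * Real.log (pz z) := fun x => by
      rw [← Finset.sum_mul, m_mid x z]
    rw [Finset.sum_congr rfl fun x _ => h1 x, ← Finset.sum_mul, m_z1 z]
  have eXZ : ∑ x, ∑ z, pxz x z * Real.log (pxz x z)
      = ∑ x, ∑ y, ∑ z, p x y z * Real.log (pxz x z) := by
    rw [sum3_xzy]
    refine Finset.sum_congr rfl fun x _ => Finset.sum_congr rfl fun z _ => ?_
    rw [← Finset.sum_mul, m_mid x z]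
  have eYZ : ∑ y, ∑ z, pyz y z * Real.log (pyz y z)
      = ∑ x, ∑ y, ∑ z, p x y z * Real.log (pyz y z) := by
    rw [sum3_yzx]
    refine Finset.sum_congr rfl fun y _ => Finset.sum_congr rfl fun z _ => ?_
    rw [← Finset.sum_mul, m_fst y z]
  -- totals
  have total_p : ∑ x, ∑ y, ∑ z, p x y z = 1 := by
    have h := μ.sum_prob (fun ω => (U ω, V ω, W ω))
    simp only [Fintype.sum_prod_type] at h
    simpa only [hp] using h
  have total_r : ∑ x, ∑ y, ∑ z, pxz x z * pyz y z / pz z = 1 := by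
    rw [sum3_zxy]
    have hz' : ∀ z, ∑ x, ∑ y, pxz x z * pyz y z / pz z = pz z := by
      intro z
      rcases (hznn z).lt_or_eq with hz | hz
      · have h1 : ∀ x, ∑ y, pxz x z * pyz y z / pz z = pxz x z := by
          intro x
          rw [← Finset.sum_div, ← Finset.mul_sum, m_z2 z]
          field_simp
        rw [Finset.sum_congr rfl fun x _ => h1 x, m_z1 z]
      · have hxz0 : ∀ x, pxz x z = 0 := fun x =>
          le_antisymm (by rw [hz]; exact hle_z x z) (hxznn x z)
        rw [← hz]
        refine Finset.sum_eq_zero fun x _ => Finset.sum_eq_zero fun y _ => ?_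
        rw [hxz0 x]
        simp
    rw [Finset.sum_congr rfl fun z _ => hz' z, μ.sum_prob W]
  -- key inequality
  have key : ∑ x, ∑ z, pxz x z * Real.log (pxz x z) + ∑ y, ∑ z, pyz y z * Real.log (pyz y z)
      ≤ (∑ x, ∑ y, ∑ z, p x y z * Real.log (p x y z)) + ∑ z, pz z * Real.log (pz z) := by
    rw [eZ, eXZ, eYZ]
    have hsum : ∀ x y z, p x y z - pxz x z * pyz y z / pz z
        ≤ p x y z * Real.log (p x y z) + p x y z * Real.log (pz z)
          - p x y z * Real.log (pxz x z) - p x y z * Real.log (pyz y z) := by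
      intro x y z
      exact logterm (hpnn x y z) (hle_xz x y z) (hle_yz x y z)
        ((hle_xz x y z).trans (hle_z x z))
        (div_nonneg (mul_nonneg (hxznn x z) (hyznn y z)) (hznn z))
    have big : 0 ≤ ∑ x, ∑ y, ∑ z,
        (p x y z * Real.log (p x y z) + p x y z * Real.log (pz z)
          - p x y z * Real.log (pxz x z) - p x y z * Real.log (pyz y z)) := by
      have h1 : ∑ x, ∑ y, ∑ z, (p x y z - pxz x z * pyz y z / pz z)
          ≤ ∑ x, ∑ y, ∑ z,
            (p x y z * Real.log (p x y z) + p x y z * Real.log (pz z)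
              - p x y z * Real.log (pxz x z) - p x y z * Real.log (pyz y z)) :=
        Finset.sum_le_sum fun x _ => Finset.sum_le_sum fun y _ =>
          Finset.sum_le_sum fun z _ => hsum x y z
      have h2 : ∑ x, ∑ y, ∑ z, (p x y z - pxz x z * pyz y z / pz z) = 0 := by
        simp only [Finset.sum_sub_distrib]
        rw [total_p, total_r]
        ring
      linarith
    simp only [Finset.sum_add_distrib, Finset.sum_sub_distrib] at big
    linarith
  rw [hH3, hHxz, hHyz, hHz]
  linarith

end FinPMF
set_option linter.unusedSectionVars false
namespace FinPMF

variable {Ω : Type*} [Fintype Ω] (μ : FinPMF Ω)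
variable {α β γ : Type*} [Fintype α] [DecidableEq α] [Fintype β] [DecidableEq β]
  [Fintype γ] [DecidableEq γ]

lemma condIndep_H (A : Ω → α) (B : Ω → β) (C : Ω → γ) (h : μ.CondIndep A B C) :
    μ.H (fun ω => (A ω, B ω, C ω)) + μ.H B
      = μ.H (fun ω => (A ω, B ω)) + μ.H (fun ω => (B ω, C ω)) := by
  set p := fun (a : α) (b : β) (c : γ) => μ.prob (fun ω => (A ω, B ω, C ω)) (a, b, c) with hp
  set pab := fun (a : α) (b : β) => μ.prob (fun ω => (A ω, B ω)) (a, b) with hpab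
  set pbc := fun (b : β) (c : γ) => μ.prob (fun ω => (B ω, C ω)) (b, c) with hpbc
  set pb := fun (b : β) => μ.prob B b with hpb
  have m_ab : ∀ a b, ∑ c, p a b c = pab a b := fun a b => μ.prob_marg3_lst A B C a b
  have m_bc : ∀ b c, ∑ a, p a b c = pbc b c := fun b c => μ.prob_marg3_fst A B C b c
  have m_b : ∀ b, ∑ a, pab a b = pb b := fun b => μ.prob_marg_left A B b
  have hle_ab : ∀ a b c, p a b c ≤ pab a b := fun a b c => μ.prob_le_marg3_lst A B C a b c
  have hle_bc : ∀ a b c, p a b c ≤ pbc b c := fun a b c => μ.prob_le_marg3_fst A B C a b c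
  have hle_b : ∀ a b, pab a b ≤ pb b := fun a b => μ.prob_le_marg_left A B a b
  have pointwise : ∀ a b c, p a b c * Real.log (p a b c)
      = p a b c * Real.log (pab a b) + p a b c * Real.log (pbc b c)
        - p a b c * Real.log (pb b) := by
    intro a b c
    rcases (μ.prob_nonneg (fun ω => (A ω, B ω, C ω)) (a, b, c)).lt_or_eq with hp0 | hp0
    · have hp0' : (0:ℝ) < p a b c := hp0
      have hab : 0 < pab a b := lt_of_lt_of_le hp0' (hle_ab a b c)
      have hbc : 0 < pbc b c := lt_of_lt_of_le hp0' (hle_bc a b c)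
      have hb : 0 < pb b := lt_of_lt_of_le hab (hle_b a b)
      have hmul : p a b c * pb b = pab a b * pbc b c := h a b c
      have hlog : Real.log (p a b c) + Real.log (pb b)
          = Real.log (pab a b) + Real.log (pbc b c) := by
        rw [← Real.log_mul hp0'.ne' hb.ne', ← Real.log_mul hab.ne' hbc.ne', hmul]
      nlinarith [hlog]
    · rw [show p a b c = 0 from hp0.symm]
      ring
  -- entropies as explicit sums
  have hH3 : μ.H (fun ω => (A ω, B ω, C ω))
      = -∑ a, ∑ b, ∑ c, p a b c * Real.log (p a b c) := by
    unfold H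
    simp only [Fintype.sum_prod_type, Finset.sum_neg_distrib, hp]
  have hHab : μ.H (fun ω => (A ω, B ω)) = -∑ a, ∑ b, pab a b * Real.log (pab a b) := by
    unfold H
    simp only [Fintype.sum_prod_type, Finset.sum_neg_distrib, hpab]
  have hHbc : μ.H (fun ω => (B ω, C ω)) = -∑ b, ∑ c, pbc b c * Real.log (pbc b c) := by
    unfold H
    simp only [Fintype.sum_prod_type, Finset.sum_neg_distrib, hpbc]
  have hHb : μ.H B = -∑ b, pb b * Real.log (pb b) := by
    unfold H
    simp only [Finset.sum_neg_distrib, hpb]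
  have e1 : ∑ a, ∑ b, ∑ c, p a b c * Real.log (pab a b)
      = ∑ a, ∑ b, pab a b * Real.log (pab a b) := by
    refine Finset.sum_congr rfl fun a _ => Finset.sum_congr rfl fun b _ => ?_
    rw [← Finset.sum_mul, m_ab a b]
  have e2 : ∑ a, ∑ b, ∑ c, p a b c * Real.log (pbc b c)
      = ∑ b, ∑ c, pbc b c * Real.log (pbc b c) := by
    rw [sum3_yzx]
    refine Finset.sum_congr rfl fun b _ => Finset.sum_congr rfl fun c _ => ?_
    rw [← Finset.sum_mul, m_bc b c]
  have e3 : ∑ a, ∑ b, ∑ c, p a b c * Real.log (pb b)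
      = ∑ b, pb b * Real.log (pb b) := by
    rw [Finset.sum_comm]
    refine Finset.sum_congr rfl fun b _ => ?_
    have h1 : ∀ a, ∑ c, p a b c * Real.log (pb b) = pab a b * Real.log (pb b) := fun a => by
      rw [← Finset.sum_mul, m_ab a b]
    rw [Finset.sum_congr rfl fun a _ => h1 a, ← Finset.sum_mul, m_b b]
  have main : ∑ a, ∑ b, ∑ c, p a b c * Real.log (p a b c)
      = ∑ a, ∑ b, pab a b * Real.log (pab a b) + ∑ b, ∑ c, pbc b c * Real.log (pbc b c)
        - ∑ b, pb b * Real.log (pb b) := by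
    rw [← e1, ← e2, ← e3]
    simp only [← Finset.sum_add_distrib, ← Finset.sum_sub_distrib]
    exact Finset.sum_congr rfl fun a _ => Finset.sum_congr rfl fun b _ =>
      Finset.sum_congr rfl fun c _ => pointwise a b c
  rw [hH3, hHab, hHbc, hHb, main]
  ring

end FinPMF
set_option linter.unusedSectionVars false
namespace FinPMF

variable {Ω : Type*} [Fintype Ω] (μ : FinPMF Ω)
variable {α β γ : Type*} [Fintype α] [DecidableEq α] [Fintype β] [DecidableEq β]
  [Fintype γ] [DecidableEq γ]

lemma condH_nonneg (X : Ω → α) (Y : Ω → β) : 0 ≤ μ.condH X Y := by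
  unfold condH
  have h := μ.H_comp_le (fun q : α × β => q.2) (fun ω => (X ω, Y ω))
  have h' : μ.H (fun ω => ((fun q : α × β => q.2) ((fun ω => (X ω, Y ω)) ω))) = μ.H Y := rfl
  linarith

lemma condIndep_condH (A : Ω → α) (B : Ω → β) (C : Ω → γ) (h : μ.CondIndep A B C) :
    μ.condH A (fun ω => (B ω, C ω)) = μ.condH A B := by
  have key := μ.condIndep_H A B C h
  unfold condH
  have e : μ.H (fun ω => (A ω, B ω, C ω)) = μ.H (fun ω => (A ω, (B ω, C ω))) := rfl
  linarith

lemma condH_pair_le (U : Ω → α) (V : Ω → β) (W : Ω → γ) :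
    μ.condH (fun ω => (U ω, V ω)) W ≤ μ.condH U W + μ.condH V W := by
  have hsub := μ.submodular U V W
  have e : μ.H (fun ω => ((U ω, V ω), W ω)) = μ.H (fun ω => (U ω, V ω, W ω)) :=
    μ.H_comp_eq (fun q : α × β × γ => ((q.1, q.2.1), q.2.2))
      (fun q : (α × β) × γ => (q.1.1, q.1.2, q.2)) (fun ω => (U ω, V ω, W ω)) (fun ω => rfl)
  unfold condH
  have e2 : μ.H (fun ω => ((fun ω => (U ω, V ω)) ω, W ω))
      = μ.H (fun ω => ((U ω, V ω), W ω)) := rfl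
  linarith

lemma condH_drop (U : Ω → α) (V : Ω → β) (W : Ω → γ) :
    μ.condH U (fun ω => (V ω, W ω)) ≤ μ.condH U V := by
  have hsub := μ.submodular U W V
  have e1 : μ.H (fun ω => (U ω, W ω, V ω)) = μ.H (fun ω => (U ω, (V ω, W ω))) :=
    μ.H_comp_eq (fun q : α × β × γ => (q.1, q.2.2, q.2.1))
      (fun q : α × γ × β => (q.1, q.2.2, q.2.1)) (fun ω => (U ω, (V ω, W ω))) (fun ω => rfl)
  have e2 : μ.H (fun ω => (W ω, V ω)) = μ.H (fun ω => (V ω, W ω)) :=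
    μ.H_comp_eq Prod.swap Prod.swap (fun ω => (V ω, W ω)) (fun ω => rfl)
  unfold condH
  linarith

lemma condH_cond_comp_le (U : Ω → α) (W : Ω → γ) (f : γ → β) :
    μ.condH U W ≤ μ.condH U (fun ω => f (W ω)) := by
  have e1 : μ.condH U W = μ.condH U (fun ω => (f (W ω), W ω)) := by
    unfold condH
    have h1 : μ.H (fun ω => (f (W ω), W ω)) = μ.H W :=
      μ.H_comp_eq (fun w : γ => (f w, w)) (fun q : β × γ => q.2) W (fun ω => rfl)
    have h2 : μ.H (fun ω => (U ω, (f (W ω), W ω))) = μ.H (fun ω => (U ω, W ω)) :=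
      μ.H_comp_eq (fun q : α × γ => (q.1, (f q.2, q.2)))
        (fun q : α × (β × γ) => (q.1, q.2.2)) (fun ω => (U ω, W ω)) (fun ω => rfl)
    linarith
  rw [e1]
  exact μ.condH_drop U (fun ω => f (W ω)) W

lemma condH_chain_pair (U : Ω → α) (V : Ω → β) (Z : Ω → γ) :
    μ.condH (fun ω => (U ω, V ω)) Z
      = μ.condH U (fun ω => (V ω, Z ω)) + μ.condH V Z := by
  unfold condH
  have e : μ.H (fun ω => ((U ω, V ω), Z ω)) = μ.H (fun ω => (U ω, (V ω, Z ω))) :=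
    μ.H_comp_eq (fun q : α × β × γ => ((q.1, q.2.1), q.2.2))
      (fun q : (α × β) × γ => (q.1.1, q.1.2, q.2)) (fun ω => (U ω, (V ω, Z ω))) (fun ω => rfl)
  have e2 : μ.H (fun ω => ((fun ω => (U ω, V ω)) ω, Z ω))
      = μ.H (fun ω => ((U ω, V ω), Z ω)) := rfl
  linarith

lemma condH_pair_ge_right (U : Ω → α) (V : Ω → β) (Z : Ω → γ) :
    μ.condH V (fun ω => (U ω, Z ω)) ≤ μ.condH (fun ω => (U ω, V ω)) Z := by
  have e : μ.condH (fun ω => (U ω, V ω)) Z = μ.condH (fun ω => (V ω, U ω)) Z := by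
    unfold condH
    have e1 : μ.H (fun ω => ((U ω, V ω), Z ω)) = μ.H (fun ω => ((V ω, U ω), Z ω)) :=
      μ.H_comp_eq (fun q : (β × α) × γ => ((q.1.2, q.1.1), q.2))
        (fun q : (α × β) × γ => ((q.1.2, q.1.1), q.2))
        (fun ω => ((V ω, U ω), Z ω)) (fun ω => rfl)
    have e2 : μ.H (fun ω => ((fun ω => (U ω, V ω)) ω, Z ω))
        = μ.H (fun ω => ((U ω, V ω), Z ω)) := rfl
    have e3 : μ.H (fun ω => ((fun ω => (V ω, U ω)) ω, Z ω))
        = μ.H (fun ω => ((V ω, U ω), Z ω)) := rfl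
    linarith
  rw [e, μ.condH_chain_pair V U Z]
  have := μ.condH_nonneg U Z
  linarith

lemma H_pair_subsingleton {κ : Type*} [Fintype κ] [DecidableEq κ] [Inhabited κ] [Subsingleton κ]
    (C : Ω → κ) (W : Ω → γ) :
    μ.H (fun ω => (C ω, W ω)) = μ.H W := by
  have h1 : μ.H (fun ω => ((default : κ), W ω)) = μ.H W :=
    μ.H_comp_eq (fun w : γ => ((default : κ), w)) (fun q : κ × γ => q.2) W (fun ω => rfl)
  have h2 : (fun ω => (C ω, W ω)) = (fun ω => ((default : κ), W ω)) :=
    funext fun ω => by rw [Subsingleton.elim (C ω) (default : κ)]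
  rw [h2, h1]

end FinPMF
set_option linter.unusedSectionVars false
namespace FinPMF

variable {Ω : Type*} [Fintype Ω] (μ : FinPMF Ω)

lemma condH_tuple_le_sum {κ : Type*} [Fintype κ] [DecidableEq κ] :
    ∀ {m : ℕ} {δ : Fin m → Type*} [∀ i, Fintype (δ i)] [∀ i, DecidableEq (δ i)]
      (T : ∀ i, Ω → δ i) (W : Ω → κ),
      μ.condH (fun ω => fun i => T i ω) W ≤ ∑ i, μ.condH (T i) W := by
  intro m
  induction m with
  | zero =>
    intro δ _ _ T W
    letI : Inhabited (∀ i : Fin 0, δ i) := ⟨fun i => i.elim0⟩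
    letI : Subsingleton (∀ i : Fin 0, δ i) := ⟨fun a b => funext fun i => i.elim0⟩
    have : μ.condH (fun ω => fun i => T i ω) W = 0 := by
      unfold condH
      rw [μ.H_pair_subsingleton]
      ring
    simp [this]
  | succ m ih =>
    intro δ _ _ T W
    have e : μ.condH (fun ω => fun i => T i ω) W
        = μ.condH (fun ω => ((fun j : Fin m => T j.castSucc ω), T (Fin.last m) ω)) W := by
      unfold condH
      have h1 : μ.H (fun ω => ((fun i => T i ω), W ω))
          = μ.H (fun ω => (((fun j : Fin m => T j.castSucc ω), T (Fin.last m) ω), W ω)) :=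
        (μ.H_comp_eq
          (fun q : (∀ i : Fin (m+1), δ i) × κ =>
            (((fun j : Fin m => q.1 j.castSucc), q.1 (Fin.last m)), q.2))
          (fun q : ((∀ j : Fin m, δ j.castSucc) × δ (Fin.last m)) × κ =>
            ((fun i => Fin.lastCases (motive := δ) q.1.2 q.1.1 i), q.2))
          (fun ω => ((fun i => T i ω), W ω))
          (fun ω => by
            refine Prod.ext ?_ rfl
            funext i
            induction i using Fin.lastCases with
            | last => simp
            | cast j => simp)).symm
      have h2 : μ.H (fun ω => (fun i => T i ω))
          = μ.H (fun ω => ((fun j : Fin m => T j.castSucc ω), T (Fin.last m) ω)) :=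
        (μ.H_comp_eq
          (fun t : ∀ i : Fin (m+1), δ i =>
            ((fun j : Fin m => t j.castSucc), t (Fin.last m)))
          (fun q : (∀ j : Fin m, δ j.castSucc) × δ (Fin.last m) =>
            (fun i => Fin.lastCases (motive := δ) q.2 q.1 i))
          (fun ω => fun i => T i ω)
          (fun ω => by
            funext i
            induction i using Fin.lastCases with
            | last => simp
            | cast j => simp)).symm
      linarith
    rw [e]
    calc μ.condH (fun ω => ((fun j : Fin m => T j.castSucc ω), T (Fin.last m) ω)) W
        ≤ μ.condH (fun ω => (fun j : Fin m => T j.castSucc ω)) W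
            + μ.condH (T (Fin.last m)) W :=
          μ.condH_pair_le (fun ω => (fun j : Fin m => T j.castSucc ω)) (T (Fin.last m)) W
      _ ≤ (∑ j : Fin m, μ.condH (T j.castSucc) W) + μ.condH (T (Fin.last m)) W :=
          add_le_add (ih (fun j => T j.castSucc) W) le_rfl
      _ = ∑ i : Fin (m+1), μ.condH (T i) W := (Fin.sum_univ_castSucc (fun i => μ.condH (T i) W)).symm

end FinPMF
set_option linter.unusedSectionVars false
namespace FinPMF

variable {Ω : Type*} [Fintype Ω] (μ : FinPMF Ω)

lemma condH_chain_tuple {κ : Type*} [Fintype κ] [DecidableEq κ]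
    {m : ℕ} {δ : Fin m → Type*} [∀ i, Fintype (δ i)] [∀ i, DecidableEq (δ i)]
    (T : ∀ i, Ω → δ i) (Z : Ω → κ) :
    μ.condH (fun ω => fun i => T i ω) Z
      = ∑ i : Fin m, μ.condH (T i)
          (fun ω => ((fun j : Fin i.val => T (Fin.castLE i.isLt.le j) ω), Z ω)) := by
  classical
  set G : ℕ → ℝ := fun i =>
    if hi : i < m then
      μ.condH (T ⟨i, hi⟩) (fun ω => ((fun j : Fin i => T (Fin.castLE hi.le j) ω), Z ω))
    else 0 with hG
  have aux : ∀ (k : ℕ) (hk : k ≤ m),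
      μ.H (fun ω => ((fun j : Fin k => T (Fin.castLE hk j) ω), Z ω)) - μ.H Z
        = ∑ i ∈ Finset.range k, G i := by
    intro k
    induction k with
    | zero =>
      intro hk
      letI : Inhabited (∀ j : Fin 0, δ (Fin.castLE hk j)) := ⟨fun j => j.elim0⟩
      letI : Subsingleton (∀ j : Fin 0, δ (Fin.castLE hk j)) :=
        ⟨fun a b => funext fun j => j.elim0⟩
      rw [μ.H_pair_subsingleton]
      simp
    | succ k ihk =>
      intro hk
      have hkm : k < m := hk
      have e : μ.H (fun ω => ((fun j : Fin (k+1) => T (Fin.castLE hk j) ω), Z ω))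
          = μ.H (fun ω => (T ⟨k, hkm⟩ ω,
              ((fun j : Fin k => T (Fin.castLE hkm.le j) ω), Z ω))) :=
        (μ.H_comp_eq
          (fun q : (∀ j : Fin (k+1), δ (Fin.castLE hk j)) × κ =>
            (q.1 (Fin.last k), ((fun j : Fin k => q.1 j.castSucc), q.2)))
          (fun q : δ ⟨k, hkm⟩ × ((∀ j : Fin k, δ (Fin.castLE hkm.le j)) × κ) =>
            ((fun j : Fin (k+1) =>
                Fin.lastCases (motive := fun j => δ (Fin.castLE hk j)) q.1 q.2.1 j), q.2.2))
          (fun ω => ((fun j : Fin (k+1) => T (Fin.castLE hk j) ω), Z ω))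
          (fun ω => by
            refine Prod.ext ?_ rfl
            funext j
            induction j using Fin.lastCases with
            | last => simp
            | cast j => simp)).symm
      have hcond : μ.H (fun ω => (T ⟨k, hkm⟩ ω,
              ((fun j : Fin k => T (Fin.castLE hkm.le j) ω), Z ω)))
          = μ.condH (T ⟨k, hkm⟩)
              (fun ω => ((fun j : Fin k => T (Fin.castLE hkm.le j) ω), Z ω))
            + μ.H (fun ω => ((fun j : Fin k => T (Fin.castLE hkm.le j) ω), Z ω)) := by
        unfold condH
        ring
      have hih := ihk hkm.le
      have hGk : G k = μ.condH (T ⟨k, hkm⟩)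
          (fun ω => ((fun j : Fin k => T (Fin.castLE hkm.le j) ω), Z ω)) := by
        rw [hG]
        exact dif_pos hkm
      rw [Finset.sum_range_succ, ← hih, e, hcond, hGk]
      ring
  have h0 : μ.H (fun ω => ((fun i => T i ω), Z ω)) - μ.H Z = ∑ i ∈ Finset.range m, G i :=
    aux m le_rfl
  have h1 : ∑ i ∈ Finset.range m, G i = ∑ i : Fin m, μ.condH (T i)
      (fun ω => ((fun j : Fin i.val => T (Fin.castLE i.isLt.le j) ω), Z ω)) := by
    rw [← Fin.sum_univ_eq_sum_range G m]
    refine Finset.sum_congr rfl fun i _ => ?_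
    show G ↑i = _
    rw [hG]
    exact dif_pos i.isLt
  calc μ.condH (fun ω => fun i => T i ω) Z
      = μ.H (fun ω => ((fun i => T i ω), Z ω)) - μ.H Z := rfl
    _ = ∑ i ∈ Finset.range m, G i := h0
    _ = _ := h1

end FinPMF
set_option linter.unusedSectionVars false

/-- Reconstruct a dependent tuple from its value at `i` and its restriction away from `i`. -/
def reconFun {ι : Type*} [DecidableEq ι] {δ : ι → Type*} (i : ι) (v : δ i)
    (r : ∀ j : {j : ι // j ≠ i}, δ j.val) : ∀ j, δ j :=
  fun j => if h : j = i then cast (congrArg δ h).symm v else r ⟨j, h⟩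

lemma reconFun_eq {ι : Type*} [DecidableEq ι] {δ : ι → Type*} (i : ι) (t : ∀ j, δ j) :
    reconFun i (t i) (fun j => t j.val) = t := by
  funext j
  unfold reconFun
  by_cases h : j = i
  · subst h
    rw [dif_pos rfl]
    exact cast_eq _ _
  · rw [dif_neg h]

namespace FinPMF

variable {Ω : Type*} [Fintype Ω] (μ : FinPMF Ω)

lemma condH_congr {α β β' : Type*} [Fintype α] [DecidableEq α] [Fintype β] [DecidableEq β]
    [Fintype β'] [DecidableEq β']
    (U : Ω → α) (V : Ω → β) (V' : Ω → β') (f : β → β') (g : β' → β)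
    (hfg : ∀ ω, f (V ω) = V' ω) (hgf : ∀ ω, g (V' ω) = V ω) :
    μ.condH U V = μ.condH U V' := by
  have hgf' : ∀ ω, g (f (V ω)) = V ω := fun ω => by rw [hfg ω]; exact hgf ω
  have h1 : μ.H (fun ω => f (V ω)) = μ.H V := μ.H_comp_eq f g V hgf'
  have h1' : μ.H V' = μ.H V := by
    rw [← h1]
    congr 1
    funext ω
    rw [hfg ω]
  have h2 : μ.H (fun ω => (U ω, f (V ω))) = μ.H (fun ω => (U ω, V ω)) :=
    μ.H_comp_eq (fun q : α × β => (q.1, f q.2)) (fun q : α × β' => (q.1, g q.2))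
      (fun ω => (U ω, V ω)) (fun ω => Prod.ext rfl (hgf' ω))
  have h2' : μ.H (fun ω => (U ω, V' ω)) = μ.H (fun ω => (U ω, V ω)) := by
    rw [← h2]
    congr 1
    funext ω
    rw [hfg ω]
  unfold condH
  rw [h1', h2']

end FinPMF
namespace FinPMF

variable {Ω : Type*} [Fintype Ω] (μ : FinPMF Ω)

lemma H_ext {α : Type*} [Fintype α] (d1 d2 : DecidableEq α) (X1 X2 : Ω → α) (h : X1 = X2) :
    @H Ω _ μ α _ d1 X1 = @H Ω _ μ α _ d2 X2 := by
  subst h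
  have : d1 = d2 := by
    funext a b
    exact Subsingleton.elim _ _
  rw [this]

end FinPMF
namespace FinPMF

lemma condH_ext {Ω : Type*} [Fintype Ω] (μ : FinPMF Ω) {α β : Type*} [Fintype α] [Fintype β]
    (da1 da2 : DecidableEq α) (db1 db2 : DecidableEq β) (X : Ω → α) (Y : Ω → β) :
    @condH Ω _ μ α β _ da1 _ db1 X Y = @condH Ω _ μ α β _ da2 _ db2 X Y := by
  have ha : da1 = da2 := by funext a b; exact Subsingleton.elim _ _
  have hb : db1 = db2 := by funext a b; exact Subsingleton.elim _ _
  rw [ha, hb]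

end FinPMF
set_option maxHeartbeats 4000000

/-- If for every `i` the state `S_{1,i}` is conditionally independent of
`(Y1^{n∖i}, Y2^{n∖i}, S2^{n∖i}, M, S1^{i−1})` given `(Y_{1,i}, Y_{2,i}, S_{2,i}, X_i, A_i)`, then
`I(M; Y1^n, S1^n, Y2^n, S2^n) ≤ I(M; Y2^n, S2^n)
  + Σ_{i=1}^n [H(Y_{1,i}, S_{1,i} | Y_{2,i}, S_{2,i})
               − H(S_{1,i} | Y_{1,i}, Y_{2,i}, S_{2,i}, X_i, A_i)]`. -/
theorem stmt_6 {Ω 𝓜 : Type*} [Fintype Ω] [Fintype 𝓜] [DecidableEq 𝓜]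
    {n : ℕ} (hn : 1 ≤ n)
    {χ 𝔞 β₁ γ₁ β₂ γ₂ : Fin n → Type*}
    [∀ i, Fintype (χ i)] [∀ i, DecidableEq (χ i)]
    [∀ i, Fintype (𝔞 i)] [∀ i, DecidableEq (𝔞 i)]
    [∀ i, Fintype (β₁ i)] [∀ i, DecidableEq (β₁ i)]
    [∀ i, Fintype (γ₁ i)] [∀ i, DecidableEq (γ₁ i)]
    [∀ i, Fintype (β₂ i)] [∀ i, DecidableEq (β₂ i)]
    [∀ i, Fintype (γ₂ i)] [∀ i, DecidableEq (γ₂ i)]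
    (μ : FinPMF Ω) (M : Ω → 𝓜)
    (X : ∀ i : Fin n, Ω → χ i) (A : ∀ i : Fin n, Ω → 𝔞 i)
    (Y1 : ∀ i : Fin n, Ω → β₁ i) (S1 : ∀ i : Fin n, Ω → γ₁ i)
    (Y2 : ∀ i : Fin n, Ω → β₂ i) (S2 : ∀ i : Fin n, Ω → γ₂ i)
    (hMarkov : ∀ i : Fin n,
      μ.CondIndep (S1 i)
        (fun ω => (Y1 i ω, Y2 i ω, S2 i ω, X i ω, A i ω))
        (fun ω =>
          ((fun j : {j : Fin n // j ≠ i} => Y1 j.val ω),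
           (fun j : {j : Fin n // j ≠ i} => Y2 j.val ω),
           (fun j : {j : Fin n // j ≠ i} => S2 j.val ω),
           M ω,
           (fun j : Fin i.val => S1 (Fin.castLE i.isLt.le j) ω)))) :
    μ.mutInfo M
        (fun ω => ((fun i => Y1 i ω), (fun i => S1 i ω), (fun i => Y2 i ω), (fun i => S2 i ω)))
      ≤ μ.mutInfo M (fun ω => ((fun i => Y2 i ω), (fun i => S2 i ω)))
        + ∑ i : Fin n,
            (μ.condH (fun ω => (Y1 i ω, S1 i ω)) (fun ω => (Y2 i ω, S2 i ω))
              - μ.condH (S1 i)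
                  (fun ω => (Y1 i ω, Y2 i ω, S2 i ω, X i ω, A i ω))) := by

  unfold FinPMF.mutInfo
  beta_reduce
  -- Part 1
  have e1 : μ.H (fun ω => ((fun i => Y1 i ω), (fun i => S1 i ω), (fun i => Y2 i ω), (fun i => S2 i ω))) = μ.H (fun ω => ((fun i => (Y1 i ω, S1 i ω)), (fun i => Y2 i ω), (fun i => S2 i ω))) :=
    (μ.H_comp_eq
      (fun q : ((∀ k, β₁ k) × (∀ k, γ₁ k) × (∀ k, β₂ k) × (∀ k, γ₂ k)) =>
        ((fun i => (q.1 i, q.2.1 i)), (q.2.2.1, q.2.2.2)))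
      (fun q : ((∀ k, β₁ k × γ₁ k) × ((∀ k, β₂ k) × (∀ k, γ₂ k))) =>
        ((fun i => (q.1 i).1), ((fun i => (q.1 i).2), q.2)))
      (fun ω => ((fun i => Y1 i ω), (fun i => S1 i ω), (fun i => Y2 i ω), (fun i => S2 i ω))) (fun ω => rfl)).symm
  have e2 : μ.condH (fun ω => fun i => (Y1 i ω, S1 i ω)) (fun ω => ((fun i => Y2 i ω), (fun i => S2 i ω)))
      ≤ ∑ i : Fin n, μ.condH (fun ω => (Y1 i ω, S1 i ω)) (fun ω => ((fun i => Y2 i ω), (fun i => S2 i ω))) :=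
    μ.condH_tuple_le_sum (fun i => fun ω => (Y1 i ω, S1 i ω)) (fun ω => ((fun i => Y2 i ω), (fun i => S2 i ω)))
  have e2' : μ.condH (fun ω => fun i => (Y1 i ω, S1 i ω)) (fun ω => ((fun i => Y2 i ω), (fun i => S2 i ω)))
      = μ.H (fun ω => ((fun i => (Y1 i ω, S1 i ω)), (fun i => Y2 i ω), (fun i => S2 i ω))) - μ.H (fun ω => ((fun i => Y2 i ω), (fun i => S2 i ω))) := by
    unfold FinPMF.condH
    congr 1
    all_goals exact μ.H_ext _ _ _ _ rfl
  have e3 : ∀ i : Fin n, μ.condH (fun ω => (Y1 i ω, S1 i ω)) (fun ω => ((fun i => Y2 i ω), (fun i => S2 i ω)))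
      ≤ μ.condH (fun ω => (Y1 i ω, S1 i ω)) (fun ω => (Y2 i ω, S2 i ω)) := fun i =>
    μ.condH_cond_comp_le (fun ω => (Y1 i ω, S1 i ω)) (fun ω => ((fun i => Y2 i ω), (fun i => S2 i ω)))
      (fun q : (∀ k, β₂ k) × (∀ k, γ₂ k) => (q.1 i, q.2 i))
  have part1 : μ.H (fun ω => ((fun i => Y1 i ω), (fun i => S1 i ω), (fun i => Y2 i ω), (fun i => S2 i ω))) - μ.H (fun ω => ((fun i => Y2 i ω), (fun i => S2 i ω)))
      ≤ ∑ i : Fin n, μ.condH (fun ω => (Y1 i ω, S1 i ω)) (fun ω => (Y2 i ω, S2 i ω)) := by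
    rw [e1, ← e2']
    exact le_trans e2 (Finset.sum_le_sum fun i _ => e3 i)
  -- Part 2
  have f1 : μ.H (fun ω => (M ω, (fun i => Y1 i ω), (fun i => S1 i ω), (fun i => Y2 i ω), (fun i => S2 i ω))) = μ.H (fun ω => ((fun i => S1 i ω), ((fun i => Y1 i ω), M ω, (fun i => Y2 i ω), (fun i => S2 i ω)))) :=
    (μ.H_comp_eq
      (fun q : (𝓜 × ((∀ k, β₁ k) × (∀ k, γ₁ k) × (∀ k, β₂ k) × (∀ k, γ₂ k))) => (q.2.2.1, (q.2.1, (q.1, q.2.2.2))))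
      (fun q : ((∀ k, γ₁ k) × ((∀ k, β₁ k) × (𝓜 × ((∀ k, β₂ k) × (∀ k, γ₂ k))))) => (q.2.2.1, (q.2.1, (q.1, q.2.2.2))))
      (fun ω => (M ω, (fun i => Y1 i ω), (fun i => S1 i ω), (fun i => Y2 i ω), (fun i => S2 i ω))) (fun ω => rfl)).symm
  have f2 : μ.condH (fun ω => fun i => S1 i ω) (fun ω => ((fun i => Y1 i ω), M ω, (fun i => Y2 i ω), (fun i => S2 i ω))) = μ.H (fun ω => ((fun i => S1 i ω), ((fun i => Y1 i ω), M ω, (fun i => Y2 i ω), (fun i => S2 i ω)))) - μ.H (fun ω => ((fun i => Y1 i ω), M ω, (fun i => Y2 i ω), (fun i => S2 i ω))) := by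
    unfold FinPMF.condH
    congr 1
    all_goals exact μ.H_ext _ _ _ _ rfl
  have f3 : 0 ≤ μ.H (fun ω => ((fun i => Y1 i ω), M ω, (fun i => Y2 i ω), (fun i => S2 i ω))) - μ.H (fun ω => (M ω, (fun i => Y2 i ω), (fun i => S2 i ω))) := by
    have h : μ.condH (fun ω => (fun i => Y1 i ω)) (fun ω => (M ω, (fun i => Y2 i ω), (fun i => S2 i ω))) = μ.H (fun ω => ((fun i => Y1 i ω), M ω, (fun i => Y2 i ω), (fun i => S2 i ω))) - μ.H (fun ω => (M ω, (fun i => Y2 i ω), (fun i => S2 i ω))) := by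
      unfold FinPMF.condH
      congr 1
      all_goals exact μ.H_ext _ _ _ _ rfl
    have h2 := μ.condH_nonneg (fun ω => (fun i => Y1 i ω)) (fun ω => (M ω, (fun i => Y2 i ω), (fun i => S2 i ω)))
    linarith
  have f4 : μ.condH (fun ω => fun i => S1 i ω) (fun ω => ((fun i => Y1 i ω), M ω, (fun i => Y2 i ω), (fun i => S2 i ω)))
      = ∑ i : Fin n, μ.condH (S1 i) (fun ω => ((fun j : Fin i.val => S1 (Fin.castLE i.isLt.le j) ω), ((fun i => Y1 i ω), M ω, (fun i => Y2 i ω), (fun i => S2 i ω)))) := by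
    rw [μ.condH_chain_tuple S1 (fun ω => ((fun i => Y1 i ω), M ω, (fun i => Y2 i ω), (fun i => S2 i ω)))]
    exact Finset.sum_congr rfl fun i _ => μ.condH_ext _ _ _ _ _ _
  have f5 : ∀ i : Fin n, μ.condH (S1 i) (fun ω => (((fun j : Fin i.val => S1 (Fin.castLE i.isLt.le j) ω), ((fun i => Y1 i ω), M ω, (fun i => Y2 i ω), (fun i => S2 i ω))), X i ω, A i ω)) ≤ μ.condH (S1 i) (fun ω => ((fun j : Fin i.val => S1 (Fin.castLE i.isLt.le j) ω), ((fun i => Y1 i ω), M ω, (fun i => Y2 i ω), (fun i => S2 i ω)))) := fun i =>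
    μ.condH_drop (S1 i) (fun ω => ((fun j : Fin i.val => S1 (Fin.castLE i.isLt.le j) ω), ((fun i => Y1 i ω), M ω, (fun i => Y2 i ω), (fun i => S2 i ω)))) (fun ω => (X i ω, A i ω))
  have f6 : ∀ i : Fin n, μ.condH (S1 i) (fun ω => (((fun j : Fin i.val => S1 (Fin.castLE i.isLt.le j) ω), ((fun i => Y1 i ω), M ω, (fun i => Y2 i ω), (fun i => S2 i ω))), X i ω, A i ω)) = μ.condH (S1 i) (fun ω => ((Y1 i ω, Y2 i ω, S2 i ω, X i ω, A i ω), ((fun j : {j : Fin n // j ≠ i} => Y1 j.val ω), (fun j : {j : Fin n // j ≠ i} => Y2 j.val ω), (fun j : {j : Fin n // j ≠ i} => S2 j.val ω), M ω, (fun j : Fin i.val => S1 (Fin.castLE i.isLt.le j) ω)))) := by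
    intro i
    refine μ.condH_congr (S1 i) (fun ω => (((fun j : Fin i.val => S1 (Fin.castLE i.isLt.le j) ω), ((fun i => Y1 i ω), M ω, (fun i => Y2 i ω), (fun i => S2 i ω))), X i ω, A i ω)) (fun ω => ((Y1 i ω, Y2 i ω, S2 i ω, X i ω, A i ω), ((fun j : {j : Fin n // j ≠ i} => Y1 j.val ω), (fun j : {j : Fin n // j ≠ i} => Y2 j.val ω), (fun j : {j : Fin n // j ≠ i} => S2 j.val ω), M ω, (fun j : Fin i.val => S1 (Fin.castLE i.isLt.le j) ω))))
      (fun q : (((∀ j : Fin i.val, γ₁ (Fin.castLE i.isLt.le j)) × ((∀ k, β₁ k) × (𝓜 × ((∀ k, β₂ k) × (∀ k, γ₂ k))))) × (χ i × 𝔞 i)) =>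
        ((q.1.2.1 i, q.1.2.2.2.1 i, q.1.2.2.2.2 i, q.2.1, q.2.2),
         ((fun j : {j : Fin n // j ≠ i} => q.1.2.1 j.val),
          (fun j : {j : Fin n // j ≠ i} => q.1.2.2.2.1 j.val),
          (fun j : {j : Fin n // j ≠ i} => q.1.2.2.2.2 j.val),
          q.1.2.2.1, q.1.1)))
      (fun q : (β₁ i × β₂ i × γ₂ i × χ i × 𝔞 i) × ((∀ j : {j : Fin n // j ≠ i}, β₁ j.val) × (∀ j : {j : Fin n // j ≠ i}, β₂ j.val) × (∀ j : {j : Fin n // j ≠ i}, γ₂ j.val) × 𝓜 × (∀ j : Fin i.val, γ₁ (Fin.castLE i.isLt.le j))) =>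
        ((q.2.2.2.2.2,
          (reconFun i q.1.1 q.2.1, q.2.2.2.2.1,
           (reconFun i q.1.2.1 q.2.2.1, reconFun i q.1.2.2.1 q.2.2.2.1))),
         (q.1.2.2.2.1, q.1.2.2.2.2)))
      (fun ω => rfl) (fun ω => ?_)
    have hY1 : reconFun i (Y1 i ω) (fun j : {j : Fin n // j ≠ i} => Y1 j.val ω)
        = (fun j => Y1 j ω) := reconFun_eq i (fun j => Y1 j ω)
    have hY2 : reconFun i (Y2 i ω) (fun j : {j : Fin n // j ≠ i} => Y2 j.val ω)
        = (fun j => Y2 j ω) := reconFun_eq i (fun j => Y2 j ω)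
    have hS2 : reconFun i (S2 i ω) (fun j : {j : Fin n // j ≠ i} => S2 j.val ω)
        = (fun j => S2 j ω) := reconFun_eq i (fun j => S2 j ω)
    show ((_, (reconFun i (Y1 i ω) _, _, (reconFun i (Y2 i ω) _, reconFun i (S2 i ω) _))), _) = _
    rw [hY1, hY2, hS2]
  have f7 : ∀ i : Fin n, μ.condH (S1 i) (fun ω => ((Y1 i ω, Y2 i ω, S2 i ω, X i ω, A i ω), ((fun j : {j : Fin n // j ≠ i} => Y1 j.val ω), (fun j : {j : Fin n // j ≠ i} => Y2 j.val ω), (fun j : {j : Fin n // j ≠ i} => S2 j.val ω), M ω, (fun j : Fin i.val => S1 (Fin.castLE i.isLt.le j) ω)))) = μ.condH (S1 i) (fun ω => (Y1 i ω, Y2 i ω, S2 i ω, X i ω, A i ω)) := fun i =>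
    μ.condIndep_condH (S1 i) (fun ω => (Y1 i ω, Y2 i ω, S2 i ω, X i ω, A i ω)) (fun ω => ((fun j : {j : Fin n // j ≠ i} => Y1 j.val ω), (fun j : {j : Fin n // j ≠ i} => Y2 j.val ω), (fun j : {j : Fin n // j ≠ i} => S2 j.val ω), M ω, (fun j : Fin i.val => S1 (Fin.castLE i.isLt.le j) ω))) (hMarkov i)
  have part2 : ∑ i : Fin n, μ.condH (S1 i) (fun ω => (Y1 i ω, Y2 i ω, S2 i ω, X i ω, A i ω)) ≤ μ.H (fun ω => (M ω, (fun i => Y1 i ω), (fun i => S1 i ω), (fun i => Y2 i ω), (fun i => S2 i ω))) - μ.H (fun ω => (M ω, (fun i => Y2 i ω), (fun i => S2 i ω))) := by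
    calc ∑ i : Fin n, μ.condH (S1 i) (fun ω => (Y1 i ω, Y2 i ω, S2 i ω, X i ω, A i ω))
        ≤ ∑ i : Fin n, μ.condH (S1 i) (fun ω => ((fun j : Fin i.val => S1 (Fin.castLE i.isLt.le j) ω), ((fun i => Y1 i ω), M ω, (fun i => Y2 i ω), (fun i => S2 i ω)))) := by
          refine Finset.sum_le_sum fun i _ => ?_
          rw [← f7 i, ← f6 i]
          exact f5 i
      _ = μ.condH (fun ω => fun i => S1 i ω) (fun ω => ((fun i => Y1 i ω), M ω, (fun i => Y2 i ω), (fun i => S2 i ω))) := (f4).symm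
      _ = μ.H (fun ω => ((fun i => S1 i ω), ((fun i => Y1 i ω), M ω, (fun i => Y2 i ω), (fun i => S2 i ω)))) - μ.H (fun ω => ((fun i => Y1 i ω), M ω, (fun i => Y2 i ω), (fun i => S2 i ω))) := f2
      _ = μ.H (fun ω => (M ω, (fun i => Y1 i ω), (fun i => S1 i ω), (fun i => Y2 i ω), (fun i => S2 i ω))) - μ.H (fun ω => ((fun i => Y1 i ω), M ω, (fun i => Y2 i ω), (fun i => S2 i ω))) := by rw [f1]
      _ ≤ μ.H (fun ω => (M ω, (fun i => Y1 i ω), (fun i => S1 i ω), (fun i => Y2 i ω), (fun i => S2 i ω))) - μ.H (fun ω => (M ω, (fun i => Y2 i ω), (fun i => S2 i ω))) := by linarith [f3]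
  have hsplit : ∑ i : Fin n,
      (μ.condH (fun ω => (Y1 i ω, S1 i ω)) (fun ω => (Y2 i ω, S2 i ω))
        - μ.condH (S1 i) (fun ω => (Y1 i ω, Y2 i ω, S2 i ω, X i ω, A i ω)))
      = (∑ i : Fin n, μ.condH (fun ω => (Y1 i ω, S1 i ω)) (fun ω => (Y2 i ω, S2 i ω)))
        - ∑ i : Fin n, μ.condH (S1 i) (fun ω => (Y1 i ω, Y2 i ω, S2 i ω, X i ω, A i ω)) := Finset.sum_sub_distrib _ _
  rw [hsplit]
  have final : (μ.H M + μ.H (fun ω => ((fun i => Y1 i ω), (fun i => S1 i ω), (fun i => Y2 i ω), (fun i => S2 i ω))))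
        - μ.H (fun ω => (M ω, (fun i => Y1 i ω), (fun i => S1 i ω), (fun i => Y2 i ω), (fun i => S2 i ω)))
      ≤ ((μ.H M + μ.H (fun ω => ((fun i => Y2 i ω), (fun i => S2 i ω))))
          - μ.H (fun ω => (M ω, (fun i => Y2 i ω), (fun i => S2 i ω))))
        + ((∑ i : Fin n, μ.condH (fun ω => (Y1 i ω, S1 i ω)) (fun ω => (Y2 i ω, S2 i ω)))
            - ∑ i : Fin n, μ.condH (S1 i) (fun ω => (Y1 i ω, Y2 i ω, S2 i ω, X i ω, A i ω))) := by
    linarith [part1, part2]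
  convert final using 10
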